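/- arXiv:2503.17640 — 2 statements merged into one kernel-verified Lean document; each statement's English description precedes it below -/
import Mathlib

section
/- Let S : [t₀,t₁] × ℝⁿ → ℝ be C^{1,2}, λ > 0, φ := exp(S/λ). If S solves ∂S/∂t + ⟨∇S, f⟩ + (1/2)⟨∇S, ggᵀ∇S⟩ + (1/2)⟨Σ, Hess S⟩ = q, then φ solves the backward advection-diffusion-reaction PDE ∂φ/∂t + ⟨∇φ, f + f_φ⟩ + (1/2)⟨Σ, Hess φ⟩ − (q/λ + q_φ)φ = 0, where f_φ := (λggᵀ − Σ)∇log φ and q_φ := (1/2)(∇log φ)ᵀ(λggᵀ − Σ)∇log φ. -/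
open scoped BigOperators Matrix

/-! With `φ = exp (S / λ)` one has `∂ₜφ = φ ∂ₜS / λ`, `∇φ = φ ∇S / λ`, `∇log φ = ∇S / λ` and
`Hess φ = φ (∇S ∇Sᵀ / λ² + Hess S / λ)`. Substituting these, the backward ADR residual of `φ` is
exactly `φ / λ` times the HJB residual of `S`: the excess drift and reaction cancel the term
`∇Sᵀ Σ ∇S / λ` produced by `Hess φ` and halve the term `∇Sᵀ ggᵀ ∇S`. -/

/-- Spatial partial derivative in the `i`-th coordinate direction. -/
noncomputable def pd {n : ℕ} (i : Fin n) (f : (Fin n → ℝ) → ℝ) (x : Fin n → ℝ) : ℝ :=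
  fderiv ℝ f x (Pi.single i 1)

section PartialDerivative

variable {n : ℕ} {u v : (Fin n → ℝ) → ℝ} {x : Fin n → ℝ}

theorem pd_mul (i : Fin n) (hu : DifferentiableAt ℝ u x) (hv : DifferentiableAt ℝ v x) :
    pd i (u * v) x = u x * pd i v x + pd i u x * v x := by
  simp only [pd, fderiv_mul hu hv, add_apply, smul_apply, smul_eq_mul]
  ring

theorem pd_div_const (i : Fin n) (hu : DifferentiableAt ℝ u x) (c : ℝ) :
    pd i (fun y => u y / c) x = pd i u x / c := by
  simp only [pd, div_eq_mul_inv, fderiv_mul_const hu, smul_apply, smul_eq_mul]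
  ring

theorem pd_exp (i : Fin n) (hu : DifferentiableAt ℝ u x) :
    pd i (fun y => Real.exp (u y)) x = Real.exp (u x) * pd i u x := by
  simp only [pd, fderiv_exp hu, smul_apply, smul_eq_mul]

theorem ContDiff.differentiable_pd (hu : ContDiff ℝ 2 u) (i : Fin n) :
    Differentiable ℝ (pd i u) :=
  ((hu.fderiv_right (by norm_num)).clm_apply contDiff_const).differentiable one_ne_zero

theorem pd_exp_div (hu : Differentiable ℝ u) (l : ℝ) (i : Fin n) (x : Fin n → ℝ) :
    pd i (fun y => Real.exp (u y / l)) x = Real.exp (u x / l) * (pd i u x / l) := by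
  rw [pd_exp i (by fun_prop), pd_div_const i (hu x)]

theorem pd_pd_exp_div (hu : ContDiff ℝ 2 u) (l : ℝ) (i j : Fin n) (x : Fin n → ℝ) :
    pd i (pd j (fun y => Real.exp (u y / l))) x
      = Real.exp (u x / l) * (pd i u x / l * (pd j u x / l) + pd i (pd j u) x / l) := by
  have hu₁ : Differentiable ℝ u := hu.differentiable two_ne_zero
  have hu₂ : Differentiable ℝ (pd j u) := hu.differentiable_pd j
  have hgrad : pd j (fun y => Real.exp (u y / l))
      = (fun y => Real.exp (u y / l)) * fun y => pd j u y / l :=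
    funext (pd_exp_div hu₁ l j)
  rw [hgrad, pd_mul i (by fun_prop) (by fun_prop), pd_exp_div hu₁, pd_div_const i (hu₂ x)]
  ring

end PartialDerivative

theorem backward_adr_residual_eq {n : ℕ} (φ l D q : ℝ) (hl : l ≠ 0) (a b : Fin n → ℝ)
    (G Sig H : Matrix (Fin n) (Fin n) ℝ) :
    φ * (D / l)
        + (fun i => φ * (a i / l)) ⬝ᵥ (fun i => b i + ((l • G - Sig) *ᵥ fun j => a j / l) i)
        + 1 / 2 * ∑ i, ∑ j, Sig i j * (φ * (a i / l * (a j / l) + H i j / l))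
        - (q / l + 1 / 2 * ((fun j => a j / l) ⬝ᵥ (l • G - Sig) *ᵥ fun j => a j / l)) * φ
      = φ / l * (D + a ⬝ᵥ b + 1 / 2 * (a ⬝ᵥ G *ᵥ a) + 1 / 2 * ∑ i, ∑ j, Sig i j * H i j - q) := by
  have hgradφ : (fun i => φ * (a i / l)) = (φ / l) • a := by
    ext i
    simp only [Pi.smul_apply, smul_eq_mul]
    ring
  have hscore : (fun j => a j / l) = l⁻¹ • a := by
    ext j
    simp only [Pi.smul_apply, smul_eq_mul]
    ring
  have hhess : ∑ i, ∑ j, Sig i j * (φ * (a i / l * (a j / l) + H i j / l))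
      = φ / l ^ 2 * (a ⬝ᵥ Sig *ᵥ a) + φ / l * ∑ i, ∑ j, Sig i j * H i j := by
    simp only [dotProduct, Matrix.mulVec, Finset.mul_sum, ← Finset.sum_add_distrib]
    exact Finset.sum_congr rfl fun i _ => Finset.sum_congr rfl fun j _ => by ring
  rw [show (fun i => b i + ((l • G - Sig) *ᵥ fun j => a j / l) i)
      = b + (l • G - Sig) *ᵥ fun j => a j / l from rfl, hgradφ, hscore, hhess]
  simp only [smul_dotProduct, dotProduct_add, dotProduct_sub, Matrix.sub_mulVec,
    Matrix.mulVec_smul, Matrix.smul_mulVec, dotProduct_smul, smul_eq_mul]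
  field_simp
  ring

/-- If `S` solves the dual HJB-type PDE, then `φ = e^{S/λ}` solves the backward
advection-diffusion-reaction PDE with excess drift `f_φ` and excess reaction `q_φ`. -/
theorem hjb_to_backward_adr_pde {n m : ℕ} (t₀ t₁ : ℝ)
    (S : ℝ → (Fin n → ℝ) → ℝ)
    (f : ℝ → (Fin n → ℝ) → Fin n → ℝ)
    (g : ℝ → (Fin n → ℝ) → Matrix (Fin n) (Fin m) ℝ)
    (Sig : ℝ → (Fin n → ℝ) → Matrix (Fin n) (Fin n) ℝ)
    (q : ℝ → (Fin n → ℝ) → ℝ)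
    (l : ℝ) (hl : 0 < l)
    (hSx : ∀ t, ContDiff ℝ 2 (S t))
    (hSt : ∀ x, ContDiff ℝ 1 (fun t => S t x))
    (hHJB : ∀ t ∈ Set.Icc t₀ t₁, ∀ x,
      deriv (fun τ => S τ x) t
        + (fun i => pd i (S t) x) ⬝ᵥ f t x
        + (1 / 2 : ℝ) * ((fun i => pd i (S t) x) ⬝ᵥ
            (g t x * (g t x).transpose).mulVec (fun j => pd j (S t) x))
        + (1 / 2 : ℝ) * (∑ i, ∑ j, Sig t x i j * pd i (pd j (S t)) x)
        = q t x) :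
    ∀ t ∈ Set.Icc t₀ t₁, ∀ x,
      -- gradient of log φ (the score)
      (fun gradlog f_φ q_φ =>
        deriv (fun τ => Real.exp (S τ x / l)) t
          + (fun i => pd i (fun y => Real.exp (S t y / l)) x) ⬝ᵥ (fun i => f t x i + f_φ i)
          + (1 / 2 : ℝ) * (∑ i, ∑ j, Sig t x i j *
              pd i (pd j (fun y => Real.exp (S t y / l))) x)
          - (q t x / l + q_φ) * Real.exp (S t x / l)
          = 0)
      (fun j => pd j (fun y => Real.log (Real.exp (S t y / l))) x)
      ((l • (g t x * (g t x).transpose) - Sig t x).mulVec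
        (fun j => pd j (fun y => Real.log (Real.exp (S t y / l))) x))
      ((1 / 2 : ℝ) * ((fun j => pd j (fun y => Real.log (Real.exp (S t y / l))) x) ⬝ᵥ
        (l • (g t x * (g t x).transpose) - Sig t x).mulVec
          (fun j => pd j (fun y => Real.log (Real.exp (S t y / l))) x))) := by
  intro t ht x
  have hS : Differentiable ℝ (S t) := (hSx t).differentiable two_ne_zero
  have hτ : DifferentiableAt ℝ (fun τ => S τ x) t := (hSt x).differentiable one_ne_zero t
  simp only [deriv_exp (hτ.div_const l), deriv_div_const, Real.log_exp, pd_div_const _ (hS _),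
    pd_exp_div hS, pd_pd_exp_div (hSx t)]
  rw [backward_adr_residual_eq _ _ _ _ hl.ne' (fun i => pd i (S t) x) (f t x)
    (g t x * (g t x)ᵀ) (Sig t x) (fun i j => pd i (pd j (S t)) x), hHJB t ht x, sub_self, mul_zero]
end

section
/- Let φ, φ̂ : [t₀,t₁] × ℝⁿ → ℝ be C^{1,2} with φ > 0, and set ρ := φ̂ φ. Suppose φ solves ∂φ/∂t + ⟨∇φ, f + f_φ⟩ + (1/2)⟨Σ, Hess φ⟩ − (q/λ + q_φ)φ = 0 and φ̂ solves ∂φ̂/∂t + ∇·(φ̂(f + f_φ)) − (1/2)Δ_Σ φ̂ + (q/λ + q_φ)φ̂ = 0, with f_φ := (λggᵀ − Σ)∇log φ, q_φ := (1/2)(∇log φ)ᵀ(λggᵀ − Σ)∇log φ. Then ρ solves the controlled Fokker-Planck equation ∂ρ/∂t + ∇·(ρ(f + ggᵀ∇(λ log φ))) = (1/2)Δ_Σ ρ. -/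
open scoped BigOperators Matrix

/-- The score `∇ log φ(t, ·)` at a point. -/
noncomputable def gradlog {n : ℕ} (φ : ℝ → (Fin n → ℝ) → ℝ) (t : ℝ) (y : Fin n → ℝ) :
    Fin n → ℝ :=
  fun j => pd j (fun z => Real.log (φ t z)) y

/-! With `∇ log φ = ∇φ / φ`, the flux of `ρ = φ̂ φ` splits as
`ρ (f + g gᵀ ∇(λ log φ)) = φ (φ̂ b) + φ̂ Σ ∇φ`, where `b = f + (λ g gᵀ - Σ) ∇ log φ` is the drift
of both factor equations. Expanding `∇·(ρ u)` and `Δ_Σ (φ̂ φ)` by the Leibniz rule (the symmetry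
of `Σ` identifies the two cross terms of `Δ_Σ`), the Fokker–Planck residual of `ρ` becomes
`φ` times the forward equation for `φ̂` plus `φ̂` times the backward equation for `φ`, in which
the reaction terms `(q/λ + q_φ)` cancel. -/

section PartialDerivative

variable {n : ℕ} {i : Fin n} {a b : (Fin n → ℝ) → ℝ} {x : Fin n → ℝ}

lemma HasFDerivAt.pd_eq {a' : (Fin n → ℝ) →L[ℝ] ℝ} (h : HasFDerivAt a a' x) :
    pd i a x = a' (Pi.single i 1) := by
  rw [pd, h.fderiv]

lemma pd_add (ha : DifferentiableAt ℝ a x) (hb : DifferentiableAt ℝ b x) :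
    pd i (fun y => a y + b y) x = pd i a x + pd i b x :=
  (ha.hasFDerivAt.add hb.hasFDerivAt).pd_eq

lemma pd_mul_s10 (ha : DifferentiableAt ℝ a x) (hb : DifferentiableAt ℝ b x) :
    pd i (fun y => a y * b y) x = pd i a x * b x + a x * pd i b x := by
  rw [(ha.hasFDerivAt.fun_mul hb.hasFDerivAt).pd_eq, pd, pd]
  simp only [add_apply, smul_apply, smul_eq_mul]
  ring

lemma pd_sum {ι : Type*} {s : Finset ι} {F : ι → (Fin n → ℝ) → ℝ}
    (hF : ∀ j ∈ s, DifferentiableAt ℝ (F j) x) :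
    pd i (fun y => ∑ j ∈ s, F j y) x = ∑ j ∈ s, pd i (F j) x := by
  simp [pd, fderiv_fun_sum hF]

lemma pd_const_mul_log (c : ℝ) (ha : DifferentiableAt ℝ a x) (ha0 : a x ≠ 0) :
    pd i (fun y => c * Real.log (a y)) x = c * (pd i a x / a x) := by
  rw [((ha.hasFDerivAt.log ha0).const_mul c).pd_eq, pd]
  simp [div_eq_inv_mul]

lemma pd_log (ha : DifferentiableAt ℝ a x) (ha0 : a x ≠ 0) :
    pd i (fun y => Real.log (a y)) x = pd i a x / a x := by
  simpa using pd_const_mul_log (i := i) 1 ha ha0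

lemma ContDiff.pd {k k' : WithTop ℕ∞} (ha : ContDiff ℝ k a) (hk : k' + 1 ≤ k) :
    ContDiff ℝ k' (pd i a) :=
  (ha.fderiv_right hk).clm_apply contDiff_const

end PartialDerivative

section Leibniz

variable {n : ℕ} {a : (Fin n → ℝ) → ℝ} {x : Fin n → ℝ}

lemma sum_pd_mul_add_sum_mul_pd {F : Fin n → (Fin n → ℝ) → ℝ}
    {P : Fin n → Fin n → (Fin n → ℝ) → ℝ} (hF : ∀ i, DifferentiableAt ℝ (F i) x)
    (hP : ∀ i j, DifferentiableAt ℝ (P i j) x) (ha : ContDiff ℝ 2 a) :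
    ∑ i, pd i (fun y => F i y * a y + ∑ j, P i j y * pd j a y) x
      = (∑ i, pd i (F i) x) * a x + ∑ i, F i x * pd i a x
        + ∑ i, ∑ j, pd i (P i j) x * pd j a x + ∑ i, ∑ j, P i j x * pd i (pd j a) x := by
  have ha₁ : Differentiable ℝ a := ha.differentiable (by norm_num)
  have hpda : ∀ j, Differentiable ℝ (pd j a) := fun j =>
    (ha.pd (k' := 1) (by norm_num)).differentiable (by norm_num)
  have hterm : ∀ i, pd i (fun y => F i y * a y + ∑ j, P i j y * pd j a y) x
      = pd i (F i) x * a x + F i x * pd i a x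
        + ∑ j, (pd i (P i j) x * pd j a x + P i j x * pd i (pd j a) x) := by
    intro i
    rw [pd_add ((hF i).fun_mul (ha₁ x)) (.fun_sum fun j _ => (hP i j).fun_mul (hpda j x)),
      pd_mul_s10 (hF i) (ha₁ x), pd_sum fun j _ => (hP i j).fun_mul (hpda j x)]
    simp only [pd_mul_s10 (hP i _) (hpda _ x)]
  simp only [hterm, Finset.sum_add_distrib, Finset.sum_mul]
  ring

lemma sum_sum_pd_pd_mul {P : Fin n → Fin n → (Fin n → ℝ) → ℝ}
    (hP : ∀ i j, ContDiff ℝ 2 (P i j)) (hPsymm : ∀ i j, P i j = P j i) (ha : ContDiff ℝ 2 a) :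
    ∑ i, ∑ j, pd i (pd j (fun y => P i j y * a y)) x
      = (∑ i, ∑ j, pd i (pd j (P i j)) x) * a x + 2 * ∑ i, ∑ j, pd i (P i j) x * pd j a x
        + ∑ i, ∑ j, P i j x * pd i (pd j a) x := by
  have hC1 : ∀ {b : (Fin n → ℝ) → ℝ}, ContDiff ℝ 2 b → Differentiable ℝ b := fun hb =>
    hb.differentiable (by norm_num)
  have hpd : ∀ {b : (Fin n → ℝ) → ℝ} (j : Fin n), ContDiff ℝ 2 b → Differentiable ℝ (pd j b) :=
    fun j hb => (hb.pd (k' := 1) (by norm_num)).differentiable (by norm_num)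
  have hterm : ∀ i j, pd i (pd j (fun y => P i j y * a y)) x
      = pd i (pd j (P i j)) x * a x + pd j (P i j) x * pd i a x
        + (pd i (P i j) x * pd j a x + P i j x * pd i (pd j a) x) := by
    intro i j
    have hpdj : pd j (fun y => P i j y * a y)
        = fun y => pd j (P i j) y * a y + P i j y * pd j a y :=
      funext fun y => pd_mul_s10 (hC1 (hP i j) y) (hC1 ha y)
    rw [hpdj,
      pd_add ((hpd j (hP i j) x).fun_mul (hC1 ha x)) ((hC1 (hP i j) x).fun_mul (hpd j ha x)),
      pd_mul_s10 (hpd j (hP i j) x) (hC1 ha x), pd_mul_s10 (hC1 (hP i j) x) (hpd j ha x)]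
  have hcross : ∑ i, ∑ j, pd j (P i j) x * pd i a x = ∑ i, ∑ j, pd i (P i j) x * pd j a x := by
    rw [Finset.sum_comm]
    exact Finset.sum_congr rfl fun i _ => Finset.sum_congr rfl fun j _ => by rw [hPsymm j i]
  simp only [hterm, Finset.sum_add_distrib, Finset.sum_mul, hcross]
  ring

end Leibniz

section FokkerPlanck

variable {n : ℕ} {φ ψ : (Fin n → ℝ) → ℝ} {S : (Fin n → ℝ) → Matrix (Fin n) (Fin n) ℝ}
  {x : Fin n → ℝ}

lemma mul_mul_add_mulVec_smul_inv_smul (ψ φ c fi : ℝ) (hφ : φ ≠ 0)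
    (G S : Matrix (Fin n) (Fin n) ℝ) (v : Fin n → ℝ) (i : Fin n) :
    ψ * φ * (fi + (G *ᵥ (c • φ⁻¹ • v)) i)
      = ψ * (fi + ((c • G - S) *ᵥ (φ⁻¹ • v)) i) * φ + ∑ j, S i j * ψ * v j := by
  simp only [Matrix.sub_mulVec, Matrix.smul_mulVec, Matrix.mulVec_smul, Pi.sub_apply,
    Pi.smul_apply, smul_eq_mul]
  have hS : ∑ j, S i j * ψ * v j = ψ * (S *ᵥ v) i := by
    simp only [Matrix.mulVec, dotProduct, Finset.mul_sum]
    exact Finset.sum_congr rfl fun j _ => by ring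
  rw [hS]
  field_simp
  ring

lemma contDiff_drift_apply {f : (Fin n → ℝ) → Fin n → ℝ}
    {G : (Fin n → ℝ) → Matrix (Fin n) (Fin n) ℝ} (l : ℝ)
    (hf : ∀ i, ContDiff ℝ 1 fun y => f y i) (hG : ∀ i j, ContDiff ℝ 1 fun y => G y i j)
    (hS : ∀ i j, ContDiff ℝ 1 fun y => S y i j) (hφ : ContDiff ℝ 2 φ) (hφ0 : ∀ y, φ y ≠ 0)
    (i : Fin n) :
    ContDiff ℝ 1 fun y =>
      f y i + ((l • G y - S y) *ᵥ fun j => pd j (fun z => Real.log (φ z)) y) i := by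
  have hφ₁ : ContDiff ℝ 1 φ := hφ.of_le (by norm_num)
  have hexpand :
      (fun y => f y i + ((l • G y - S y) *ᵥ fun j => pd j (fun z => Real.log (φ z)) y) i)
        = fun y => f y i + ∑ j, (l * G y i j - S y i j) * (pd j φ y / φ y) := by
    funext y
    simp only [Matrix.mulVec, dotProduct, Matrix.sub_apply, Matrix.smul_apply, smul_eq_mul,
      pd_log (hφ₁.differentiable one_ne_zero y) (hφ0 y)]
  rw [hexpand]
  exact (hf i).add <| ContDiff.sum fun j _ =>
    ((contDiff_const.mul (hG i j)).sub (hS i j)).mul ((hφ.pd (by norm_num)).div hφ₁ hφ0)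

lemma sum_pd_controlled_flux {f b : (Fin n → ℝ) → Fin n → ℝ}
    {G : (Fin n → ℝ) → Matrix (Fin n) (Fin n) ℝ} {l : ℝ}
    (hb : ∀ y, b y = f y + (l • G y - S y) *ᵥ fun j => pd j (fun z => Real.log (φ z)) y)
    (hb₁ : ∀ i, Differentiable ℝ fun y => b y i) (hφ : ContDiff ℝ 2 φ) (hφ0 : ∀ y, φ y ≠ 0)
    (hψ : Differentiable ℝ ψ) (hS : ∀ i j, Differentiable ℝ fun y => S y i j) :
    ∑ i, pd i (fun y => ψ y * φ y *
        (f y i + (G y *ᵥ fun j => pd j (fun z => l * Real.log (φ z)) y) i)) x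
      = (∑ i, pd i (fun y => ψ y * b y i) x) * φ x + ψ x * ((fun i => pd i φ x) ⬝ᵥ b x)
        + ∑ i, ∑ j, pd i (fun y => S y i j * ψ y) x * pd j φ x
        + ψ x * ∑ i, ∑ j, S x i j * pd i (pd j φ) x := by
  have hφ₁ : Differentiable ℝ φ := hφ.differentiable (by norm_num)
  have hflux : ∀ i, (fun y => ψ y * φ y *
      (f y i + (G y *ᵥ fun j => pd j (fun z => l * Real.log (φ z)) y) i))
      = fun y => ψ y * b y i * φ y + ∑ j, S y i j * ψ y * pd j φ y := by
    intro i
    funext y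
    have hscore : (fun j => pd j (fun z => Real.log (φ z)) y) = (φ y)⁻¹ • fun j => pd j φ y :=
      funext fun j => (pd_log (hφ₁ y) (hφ0 y)).trans (div_eq_inv_mul _ _)
    have hlscore : (fun j => pd j (fun z => l * Real.log (φ z)) y)
        = l • (φ y)⁻¹ • fun j => pd j φ y :=
      funext fun j => (pd_const_mul_log l (hφ₁ y) (hφ0 y)).trans (by simp [div_eq_inv_mul])
    rw [hb, hlscore, hscore]
    exact mul_mul_add_mulVec_smul_inv_smul _ _ _ _ (hφ0 y) _ _ _ i
  simp only [hflux]
  rw [sum_pd_mul_add_sum_mul_pd (F := fun i y => ψ y * b y i) (P := fun i j y => S y i j * ψ y)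
    (fun i => (hψ.fun_mul (hb₁ i)) x) (fun i j => ((hS i j).fun_mul hψ) x) hφ]
  have hdrift : ∑ i, ψ x * b x i * pd i φ x = ψ x * ((fun i => pd i φ x) ⬝ᵥ b x) := by
    rw [dotProduct, Finset.mul_sum]
    exact Finset.sum_congr rfl fun i _ => by ring
  have hhess : ∑ i, ∑ j, S x i j * ψ x * pd i (pd j φ) x
      = ψ x * ∑ i, ∑ j, S x i j * pd i (pd j φ) x := by
    simp only [Finset.mul_sum]
    exact Finset.sum_congr rfl fun i _ => Finset.sum_congr rfl fun j _ => by ring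
  rw [hdrift, hhess]

lemma sum_sum_pd_pd_mul_mul (hS : ∀ i j, ContDiff ℝ 2 fun y => S y i j)
    (hSsymm : ∀ y, (S y).IsSymm) (hψ : ContDiff ℝ 2 ψ) (hφ : ContDiff ℝ 2 φ) :
    ∑ i, ∑ j, pd i (pd j (fun y => S y i j * (ψ y * φ y))) x
      = (∑ i, ∑ j, pd i (pd j fun y => S y i j * ψ y) x) * φ x
        + 2 * ∑ i, ∑ j, pd i (fun y => S y i j * ψ y) x * pd j φ x
        + ψ x * ∑ i, ∑ j, S x i j * pd i (pd j φ) x := by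
  simp only [← mul_assoc]
  rw [sum_sum_pd_pd_mul (P := fun i j y => S y i j * ψ y) (fun i j => (hS i j).mul hψ)
    (fun i j => funext fun y => by simp only [(hSsymm y).apply j i]) hφ]
  simp only [Finset.mul_sum]
  congr 1
  exact Finset.sum_congr rfl fun i _ => Finset.sum_congr rfl fun j _ => by ring

end FokkerPlanck

theorem factors_solve_fokker_planck_general {n m : ℕ} (t₀ t₁ : ℝ)
    (φ φhat : ℝ → (Fin n → ℝ) → ℝ)
    (f : ℝ → (Fin n → ℝ) → Fin n → ℝ)
    (g : ℝ → (Fin n → ℝ) → Matrix (Fin n) (Fin m) ℝ)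
    (Sig : ℝ → (Fin n → ℝ) → Matrix (Fin n) (Fin n) ℝ)
    (q : ℝ → (Fin n → ℝ) → ℝ)
    (l : ℝ)
    (hφx : ∀ t, ContDiff ℝ 2 (φ t)) (hφt : ∀ x, ContDiff ℝ 1 (fun t => φ t x))
    (hφhatx : ∀ t, ContDiff ℝ 2 (φhat t)) (hφhatt : ∀ x, ContDiff ℝ 1 (fun t => φhat t x))
    (hpos : ∀ t x, 0 < φ t x)
    (hfx : ∀ t i, ContDiff ℝ 1 (fun y => f t y i))
    (hgx : ∀ t i j, ContDiff ℝ 1 (fun y => g t y i j))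
    (hSigx : ∀ t i j, ContDiff ℝ 2 (fun y => Sig t y i j))
    (hSigsym : ∀ t y, (Sig t y).IsSymm)
    -- backward PDE for φ
    (hφPDE : ∀ t ∈ Set.Icc t₀ t₁, ∀ x,
      deriv (fun τ => φ τ x) t
        + (fun i => pd i (φ t) x) ⬝ᵥ (fun i => f t x i +
            ((l • (g t x * (g t x).transpose) - Sig t x).mulVec (gradlog φ t x)) i)
        + (1 / 2 : ℝ) * (∑ i, ∑ j, Sig t x i j * pd i (pd j (φ t)) x)
        - (q t x / l + (1 / 2 : ℝ) * (gradlog φ t x ⬝ᵥ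
            (l • (g t x * (g t x).transpose) - Sig t x).mulVec (gradlog φ t x))) * φ t x
        = 0)
    -- forward PDE for φ̂
    (hφhatPDE : ∀ t ∈ Set.Icc t₀ t₁, ∀ x,
      deriv (fun τ => φhat τ x) t
        + (∑ i, pd i (fun y => φhat t y * (f t y i +
            ((l • (g t y * (g t y).transpose) - Sig t y).mulVec (gradlog φ t y)) i)) x)
        - (1 / 2 : ℝ) * (∑ i, ∑ j, pd i (pd j (fun y => Sig t y i j * φhat t y)) x)
        + (q t x / l + (1 / 2 : ℝ) * (gradlog φ t x ⬝ᵥ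
            (l • (g t x * (g t x).transpose) - Sig t x).mulVec (gradlog φ t x))) * φhat t x
        = 0) :
    -- conclusion: ρ := φ̂ φ solves the controlled Fokker-Planck equation
    ∀ t ∈ Set.Icc t₀ t₁, ∀ x,
      deriv (fun τ => φhat τ x * φ τ x) t
        + (∑ i, pd i (fun y => (φhat t y * φ t y) * (f t y i +
            ((g t y * (g t y).transpose).mulVec
              (fun j => pd j (fun z => l * Real.log (φ t z)) y)) i)) x)
        = (1 / 2 : ℝ) * (∑ i, ∑ j, pd i (pd j (fun y => Sig t y i j * (φhat t y * φ t y))) x) := by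
  intro t ht x
  have hφ0 : ∀ y, φ t y ≠ 0 := fun y => (hpos t y).ne'
  have hggT : ∀ i j, ContDiff ℝ 1 fun y => (g t y * (g t y)ᵀ) i j := fun i j => by
    simp only [Matrix.mul_apply, Matrix.transpose_apply]
    exact ContDiff.sum fun k _ => (hgx t i k).mul (hgx t j k)
  have hdrift := fun i => contDiff_drift_apply l (hfx t) hggT
    (fun i j => (hSigx t i j).of_le (by norm_num)) (hφx t) hφ0 i
  have H1 := hφPDE t ht x
  have H2 := hφhatPDE t ht x
  unfold gradlog at H1 H2
  rw [deriv_fun_mul ((hφhatt x).differentiable one_ne_zero t)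
      ((hφt x).differentiable one_ne_zero t),
    sum_pd_controlled_flux (b := fun y i => f t y i + ((l • (g t y * (g t y)ᵀ) - Sig t y) *ᵥ
      fun j => pd j (fun z => Real.log (φ t z)) y) i) (fun y => rfl)
      (fun i => (hdrift i).differentiable one_ne_zero) (hφx t) hφ0
      ((hφhatx t).differentiable (by norm_num))
      (fun i j => (hSigx t i j).differentiable (by norm_num)),
    sum_sum_pd_pd_mul_mul (hSigx t) (hSigsym t) (hφhatx t) (hφx t)]
  linear_combination φ t x * H2 + φhat t x * H1

/-- If the Schrödinger factors `(φ̂, φ)` solve the forward-backward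
advection-diffusion-reaction PDEs, then `ρ = φ̂ φ` solves the controlled
Fokker-Planck equation with the optimal control `u = gᵀ∇(λ log φ)`. -/
theorem factors_solve_fokker_planck {n m : ℕ} (t₀ t₁ : ℝ)
    (φ φhat : ℝ → (Fin n → ℝ) → ℝ)
    (f : ℝ → (Fin n → ℝ) → Fin n → ℝ)
    (g : ℝ → (Fin n → ℝ) → Matrix (Fin n) (Fin m) ℝ)
    (Sig : ℝ → (Fin n → ℝ) → Matrix (Fin n) (Fin n) ℝ)
    (q : ℝ → (Fin n → ℝ) → ℝ)
    (l : ℝ) (hl : 0 < l)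
    (hφx : ∀ t, ContDiff ℝ 2 (φ t)) (hφt : ∀ x, ContDiff ℝ 1 (fun t => φ t x))
    (hφhatx : ∀ t, ContDiff ℝ 2 (φhat t)) (hφhatt : ∀ x, ContDiff ℝ 1 (fun t => φhat t x))
    (hpos : ∀ t x, 0 < φ t x)
    (hfx : ∀ t i, ContDiff ℝ 1 (fun y => f t y i))
    (hgx : ∀ t i j, ContDiff ℝ 1 (fun y => g t y i j))
    (hSigx : ∀ t i j, ContDiff ℝ 2 (fun y => Sig t y i j))
    (hSigsym : ∀ t y, (Sig t y).IsSymm)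
    -- backward PDE for φ
    (hφPDE : ∀ t ∈ Set.Icc t₀ t₁, ∀ x,
      deriv (fun τ => φ τ x) t
        + (fun i => pd i (φ t) x) ⬝ᵥ (fun i => f t x i +
            ((l • (g t x * (g t x).transpose) - Sig t x).mulVec (gradlog φ t x)) i)
        + (1 / 2 : ℝ) * (∑ i, ∑ j, Sig t x i j * pd i (pd j (φ t)) x)
        - (q t x / l + (1 / 2 : ℝ) * (gradlog φ t x ⬝ᵥ
            (l • (g t x * (g t x).transpose) - Sig t x).mulVec (gradlog φ t x))) * φ t x
        = 0)
    -- forward PDE for φ̂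
    (hφhatPDE : ∀ t ∈ Set.Icc t₀ t₁, ∀ x,
      deriv (fun τ => φhat τ x) t
        + (∑ i, pd i (fun y => φhat t y * (f t y i +
            ((l • (g t y * (g t y).transpose) - Sig t y).mulVec (gradlog φ t y)) i)) x)
        - (1 / 2 : ℝ) * (∑ i, ∑ j, pd i (pd j (fun y => Sig t y i j * φhat t y)) x)
        + (q t x / l + (1 / 2 : ℝ) * (gradlog φ t x ⬝ᵥ
            (l • (g t x * (g t x).transpose) - Sig t x).mulVec (gradlog φ t x))) * φhat t x
        = 0) :
    -- conclusion: ρ := φ̂ φ solves the controlled Fokker-Planck equation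
    ∀ t ∈ Set.Icc t₀ t₁, ∀ x,
      deriv (fun τ => φhat τ x * φ τ x) t
        + (∑ i, pd i (fun y => (φhat t y * φ t y) * (f t y i +
            ((g t y * (g t y).transpose).mulVec
              (fun j => pd j (fun z => l * Real.log (φ t z)) y)) i)) x)
        = (1 / 2 : ℝ) * (∑ i, ∑ j, pd i (pd j (fun y => Sig t y i j * (φhat t y * φ t y))) x) :=
  factors_solve_fokker_planck_general t₀ t₁ φ φhat f g Sig q l hφx hφt hφhatx hφhatt hpos hfx hgx
    hSigx hSigsym hφPDE hφhatPDE
end
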